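/- Given two odd-sized worker sets V and V' of the same cardinality k such that there is a bijection φ : V → V' with α_v ≥ α_{φ(v)} for every v ∈ V, the majority-voting accuracy satisfies Pr(V) ≥ Pr(V'). -/
import Mathlib

/-- Majority-voting accuracy of the odd-sized worker set `V`. -/
noncomputable def maj {ι : Type*} [DecidableEq ι] (V : Finset ι) (α : ι → ℝ) : ℝ :=
  ∑ S ∈ V.powerset.filter (fun S => (V.card + 1) / 2 ≤ S.card),
    (∏ j ∈ S, α j) * ∏ j ∈ V \ S, (1 - α j)

lemma maj_congr {ι : Type*} [DecidableEq ι] (V : Finset ι) (α β : ι → ℝ)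
    (h : ∀ j ∈ V, α j = β j) : maj V α = maj V β := by
  unfold maj
  refine Finset.sum_congr rfl fun S hS => ?_
  simp only [Finset.mem_filter, Finset.mem_powerset] at hS
  congr 1
  · exact Finset.prod_congr rfl fun j hj => h j (hS.1 hj)
  · exact Finset.prod_congr rfl fun j hj => by rw [h j (Finset.mem_sdiff.mp hj).1]

lemma maj_insert {ι : Type*} [DecidableEq ι] (W : Finset ι) (v : ι) (hv : v ∉ W)
    (α : ι → ℝ) :
    maj (insert v W) α =
      (∑ T ∈ W.powerset.filter (fun T => (W.card + 2) / 2 ≤ T.card),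
        (∏ j ∈ T, α j) * ∏ j ∈ W \ T, (1 - α j))
      + α v * ((∑ T ∈ W.powerset.filter (fun T => (W.card + 2) / 2 ≤ T.card + 1),
          ((∏ j ∈ T, α j) * ∏ j ∈ W \ T, (1 - α j)))
        - ∑ T ∈ W.powerset.filter (fun T => (W.card + 2) / 2 ≤ T.card),
          ((∏ j ∈ T, α j) * ∏ j ∈ W \ T, (1 - α j))) := by
  classical
  unfold maj
  rw [Finset.sum_filter, Finset.sum_powerset_insert hv,
    Finset.card_insert_of_notMem hv]
  have h1 : ∀ T ∈ W.powerset,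
      (if (W.card + 1 + 1) / 2 ≤ T.card then
        (∏ j ∈ T, α j) * ∏ j ∈ insert v W \ T, (1 - α j) else 0)
      = (if (W.card + 2) / 2 ≤ T.card then
          (1 - α v) * ((∏ j ∈ T, α j) * ∏ j ∈ W \ T, (1 - α j)) else 0) := by
    intro T hT
    rw [Finset.mem_powerset] at hT
    have hvT : v ∉ T := fun h => hv (hT h)
    have hset : insert v W \ T = insert v (W \ T) := by
      ext x
      simp only [Finset.mem_sdiff, Finset.mem_insert]
      constructor
      · rintro ⟨h1 | h1, h2⟩
        · exact Or.inl h1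
        · exact Or.inr ⟨h1, h2⟩
      · rintro (rfl | ⟨h1, h2⟩)
        · exact ⟨Or.inl rfl, hvT⟩
        · exact ⟨Or.inr h1, h2⟩
    have hvWT : v ∉ W \ T := fun h => hv (Finset.mem_sdiff.mp h).1
    rw [hset, Finset.prod_insert hvWT]
    ring_nf
  have h2 : ∀ T ∈ W.powerset,
      (if (W.card + 1 + 1) / 2 ≤ (insert v T).card then
        (∏ j ∈ insert v T, α j) * ∏ j ∈ insert v W \ insert v T, (1 - α j) else 0)
      = (if (W.card + 2) / 2 ≤ T.card + 1 then
          α v * ((∏ j ∈ T, α j) * ∏ j ∈ W \ T, (1 - α j)) else 0) := by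
    intro T hT
    rw [Finset.mem_powerset] at hT
    have hvT : v ∉ T := fun h => hv (hT h)
    have hset : insert v W \ insert v T = W \ T := by
      ext x
      simp only [Finset.mem_sdiff, Finset.mem_insert]
      constructor
      · rintro ⟨h1 | h1, h2⟩
        · exact absurd (Or.inl h1) h2
        · exact ⟨h1, fun h => h2 (Or.inr h)⟩
      · rintro ⟨hx1, hx2⟩
        refine ⟨Or.inr hx1, ?_⟩
        rintro (rfl | h)
        · exact hv hx1
        · exact hx2 h
    rw [hset, Finset.card_insert_of_notMem hvT, Finset.prod_insert hvT]
    ring_nf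
  rw [Finset.sum_congr rfl h1, Finset.sum_congr rfl h2,
    ← Finset.sum_filter, ← Finset.sum_filter]
  rw [← Finset.mul_sum, ← Finset.mul_sum]
  ring

lemma maj_point {ι : Type*} [DecidableEq ι] (W : Finset ι) (v : ι) (hv : v ∉ W)
    (α β : ι → ℝ)
    (heq : ∀ j ∈ W, β j = α j)
    (h01 : ∀ j ∈ W, 0 ≤ α j ∧ α j ≤ 1)
    (hle : β v ≤ α v) :
    maj (insert v W) β ≤ maj (insert v W) α := by
  classical
  rw [maj_insert W v hv α, maj_insert W v hv β]
  have hg : ∀ T ∈ W.powerset,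
      (∏ j ∈ T, β j) * ∏ j ∈ W \ T, (1 - β j)
      = (∏ j ∈ T, α j) * ∏ j ∈ W \ T, (1 - α j) := by
    intro T hT
    rw [Finset.mem_powerset] at hT
    congr 1
    · exact Finset.prod_congr rfl fun j hj => heq j (hT hj)
    · exact Finset.prod_congr rfl fun j hj => by rw [heq j (Finset.mem_sdiff.mp hj).1]
  have hg1 := Finset.sum_congr rfl (fun T hT =>
    hg T (Finset.mem_filter.mp hT).1) (f := fun T => (∏ j ∈ T, β j) * ∏ j ∈ W \ T, (1 - β j))
    (g := fun T => (∏ j ∈ T, α j) * ∏ j ∈ W \ T, (1 - α j))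
    (s₁ := W.powerset.filter (fun T => (W.card + 2) / 2 ≤ T.card))
  have hg2 := Finset.sum_congr rfl (fun T hT =>
    hg T (Finset.mem_filter.mp hT).1) (f := fun T => (∏ j ∈ T, β j) * ∏ j ∈ W \ T, (1 - β j))
    (g := fun T => (∏ j ∈ T, α j) * ∏ j ∈ W \ T, (1 - α j))
    (s₁ := W.powerset.filter (fun T => (W.card + 2) / 2 ≤ T.card + 1))
  rw [hg1, hg2]
  have hsub : W.powerset.filter (fun T => (W.card + 2) / 2 ≤ T.card)
      ⊆ W.powerset.filter (fun T => (W.card + 2) / 2 ≤ T.card + 1) := by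
    intro T hT
    rw [Finset.mem_filter] at hT ⊢
    exact ⟨hT.1, le_trans hT.2 (Nat.le_succ _)⟩
  have hnn : ∀ T ∈ W.powerset.filter (fun T => (W.card + 2) / 2 ≤ T.card + 1),
      T ∉ W.powerset.filter (fun T => (W.card + 2) / 2 ≤ T.card) →
      0 ≤ (∏ j ∈ T, α j) * ∏ j ∈ W \ T, (1 - α j) := by
    intro T hT _
    have hTW : T ⊆ W := Finset.mem_powerset.mp (Finset.mem_filter.mp hT).1
    apply mul_nonneg
    · exact Finset.prod_nonneg fun j hj => (h01 j (hTW hj)).1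
    · exact Finset.prod_nonneg fun j hj => by
        linarith [(h01 j (Finset.mem_sdiff.mp hj).1).2]
  have hdiff : 0 ≤
      (∑ T ∈ W.powerset.filter (fun T => (W.card + 2) / 2 ≤ T.card + 1),
        (∏ j ∈ T, α j) * ∏ j ∈ W \ T, (1 - α j))
      - ∑ T ∈ W.powerset.filter (fun T => (W.card + 2) / 2 ≤ T.card),
        (∏ j ∈ T, α j) * ∏ j ∈ W \ T, (1 - α j) := by
    have := Finset.sum_le_sum_of_subset_of_nonneg hsub hnn
    linarith
  nlinarith [mul_le_mul_of_nonneg_right hle hdiff]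

lemma maj_mono {ι : Type*} [DecidableEq ι] (V : Finset ι) (α β : ι → ℝ)
    (hα : ∀ j, 0 ≤ α j ∧ α j ≤ 1)
    (hβ : ∀ j, 0 ≤ β j ∧ β j ≤ 1)
    (hle : ∀ j ∈ V, β j ≤ α j) :
    maj V β ≤ maj V α := by
  classical
  have key : ∀ U : Finset ι,
      maj V β ≤ maj V (fun j => if j ∈ U then α j else β j) := by
    intro U
    induction U using Finset.induction_on with
    | empty => simp
    | @insert a U ha ih =>
      refine le_trans ih ?_
      by_cases haV : a ∈ V
      · have hV : V = insert a (V.erase a) := (Finset.insert_erase haV).symm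
        rw [hV]
        apply maj_point
        · exact Finset.notMem_erase a V
        · intro j hj
          have hja : j ≠ a := Finset.ne_of_mem_erase hj
          simp [Finset.mem_insert, hja]
        · intro j hj
          by_cases h : j ∈ insert a U
          · simp [h]; exact hα j
          · simp [h]; exact hβ j
        · simp [ha]
          exact hle a haV
      · apply le_of_eq
        apply maj_congr
        intro j hj
        have hja : j ≠ a := fun h => haV (h ▸ hj)
        simp [Finset.mem_insert, hja]
  have := key V
  refine le_trans this (le_of_eq ?_)
  apply maj_congr
  intro j hj
  simp [hj]

/-- If `V` and `V'` are odd-sized worker sets of the same cardinality and there is a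
bijection `φ : V → V'` with `α v ≥ α (φ v)` for every `v ∈ V`, then the majority-voting
accuracy satisfies `Pr(V) ≥ Pr(V')`. -/
theorem majority_compare_dominating_sets {ι : Type*} [DecidableEq ι]
    (V V' : Finset ι) (α : ι → ℝ) (φ : ι → ι)
    (hodd : Odd V.card) (hcard : V.card = V'.card)
    (hα : ∀ j, 0 ≤ α j ∧ α j ≤ 1)
    (hbij : Set.BijOn φ (V : Set ι) (V' : Set ι))
    (hdom : ∀ v ∈ V, α (φ v) ≤ α v) :
    maj V' α ≤ maj V α := by
  classical
  -- handle the degenerate empty case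
  rcases Finset.eq_empty_or_nonempty V with hV | hV
  · have hV' : V' = ∅ := by
      have h2 : (V' : Set ι) = φ '' (V : Set ι) := hbij.image_eq.symm
      rw [hV] at h2
      simpa using h2
    rw [hV, hV']
  have : Nonempty ι := ⟨hV.choose⟩
  set ψ := Function.invFunOn φ V with hψdef
  have hinv : Set.InvOn ψ φ (V : Set ι) (V' : Set ι) := hbij.invOn_invFunOn
  -- key set fact
  have himg : ∀ S : Finset ι, S ⊆ V → V' \ S.image φ = (V \ S).image φ := by
    intro S hS
    ext x
    simp only [Finset.mem_sdiff, Finset.mem_image]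
    constructor
    · rintro ⟨hx, hnx⟩
      obtain ⟨y, hy, rfl⟩ := hbij.surjOn hx
      refine ⟨y, ⟨hy, fun hyS => hnx ⟨y, hyS, rfl⟩⟩, rfl⟩
    · rintro ⟨y, ⟨hyV, hyS⟩, rfl⟩
      refine ⟨hbij.mapsTo hyV, ?_⟩
      rintro ⟨z, hzS, hz⟩
      exact hyS (hbij.injOn (hS hzS) hyV hz ▸ hzS)
  -- transport: maj V' α = maj V (α ∘ φ)
  have hbijpsi : Set.BijOn ψ (V' : Set ι) (V : Set ι) := Set.BijOn.symm hinv.symm hbij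
  have htrans : maj V' α = maj V (fun j => α (φ j)) := by
    unfold maj
    rw [← hcard]
    refine (Finset.sum_nbij' (fun S => S.image φ) (fun S => S.image ψ) ?_ ?_ ?_ ?_ ?_).symm
    · intro S hS
      rw [Finset.mem_filter, Finset.mem_powerset] at hS ⊢
      constructor
      · intro x hx
        obtain ⟨y, hy, rfl⟩ := Finset.mem_image.mp hx
        exact Finset.mem_coe.mp (hbij.mapsTo (hS.1 hy))
      · rw [Finset.card_image_of_injOn (hbij.injOn.mono (by exact_mod_cast hS.1))]
        exact hS.2
    · intro S hS
      rw [Finset.mem_filter, Finset.mem_powerset] at hS ⊢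
      constructor
      · intro x hx
        obtain ⟨y, hy, rfl⟩ := Finset.mem_image.mp hx
        exact Finset.mem_coe.mp (hbijpsi.mapsTo (hS.1 hy))
      · rw [Finset.card_image_of_injOn (hbijpsi.injOn.mono (by exact_mod_cast hS.1))]
        exact hS.2
    · intro S hS
      have hSV : S ⊆ V := Finset.mem_powerset.mp (Finset.mem_filter.mp hS).1
      show (S.image φ).image ψ = S
      rw [Finset.image_image]
      calc S.image (ψ ∘ φ) = S.image id :=
            Finset.image_congr (fun x hx => hinv.1 (hSV hx))
        _ = S := Finset.image_id
    · intro S hS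
      have hSV : S ⊆ V' := Finset.mem_powerset.mp (Finset.mem_filter.mp hS).1
      show (S.image ψ).image φ = S
      rw [Finset.image_image]
      calc S.image (φ ∘ ψ) = S.image id :=
            Finset.image_congr (fun x hx => hinv.2 (hSV hx))
        _ = S := Finset.image_id
    · intro S hS
      have hSV : S ⊆ V := Finset.mem_powerset.mp (Finset.mem_filter.mp hS).1
      have hinj : ∀ x ∈ S, ∀ y ∈ S, φ x = φ y → x = y :=
        fun x hx y hy h => hbij.injOn (hSV hx) (hSV hy) h
      have hinj2 : ∀ x ∈ V \ S, ∀ y ∈ V \ S, φ x = φ y → x = y :=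
        fun x hx y hy h => hbij.injOn (Finset.mem_sdiff.mp hx).1 (Finset.mem_sdiff.mp hy).1 h
      rw [himg S hSV, Finset.prod_image hinj, Finset.prod_image hinj2]
  rw [htrans]
  exact maj_mono V α (fun j => α (φ j)) hα (fun j => hα (φ j)) hdom
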